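/- arXiv:math/9808003 — 2 statements merged into one kernel-verified Lean document; each statement's English description precedes it below -/
import Mathlib

section
/- For the A_{2n}^{(1)} system with F_j = f_j(Σ_{r=1}^n f_{j+2r-1} - Σ_{r=1}^n f_{j+2r}) + α_j (indices mod 2n+1), the Demazure-type identity Δ_1(F_0) = F_1/f_1² holds, where Δ_1(φ) = (s_1(φ) - φ)/α_1 and s_1 is the Bäcklund transformation. -/
/-!
For `n ≥ 1` the indices `0, 1, 2` are distinct and `2n + 1 ≡ 0`, so with the tails
`R = Σ_{r<n-1} f_{2r+3}` and `R' = Σ_{r<n-1} f_{2r+4}` one has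
`F₀ = f₀ (R + f₁ - (R' + f₂)) + α₀` and `F₁ = f₁ (R' + f₂ - (R + f₀)) + α₁`.
The tails involve only generators fixed by `s₁`, so `Δ₁(F₀) = F₁ / f₁²` becomes an identity
of rational functions in `α₀, α₁, f₀, f₁, f₂, R, R'`.
-/

open MvPolynomial

noncomputable section

/-- The field `ℂ(α₀,…,α_l; f₀,…,f_l)` of rational functions. -/
abbrev K (l : ℕ) : Type := FractionRing (MvPolynomial (Fin (l+1) ⊕ Fin (l+1)) ℂ)

/-- The generator `α_i`. -/
def av (l : ℕ) (i : Fin (l+1)) : K l :=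
  algebraMap (MvPolynomial (Fin (l+1) ⊕ Fin (l+1)) ℂ) (K l) (X (Sum.inl i))

/-- The generator `f_i`. -/
def fv (l : ℕ) (i : Fin (l+1)) : K l :=
  algebraMap (MvPolynomial (Fin (l+1) ⊕ Fin (l+1)) ℂ) (K l) (X (Sum.inr i))

/-- `s` is the Bäcklund transformation `s_i`. -/
def IsBT (l : ℕ) (i : Fin (l+1)) (s : K l ≃+* K l) : Prop :=
  s (av l i) = - av l i ∧
  s (av l (i+1)) = av l (i+1) + av l i ∧
  s (av l (i-1)) = av l (i-1) + av l i ∧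
  (∀ j : Fin (l+1), j ≠ i → j ≠ i+1 → j ≠ i-1 → s (av l j) = av l j) ∧
  s (fv l i) = fv l i ∧
  s (fv l (i+1)) = fv l (i+1) + av l i / fv l i ∧
  s (fv l (i-1)) = fv l (i-1) - av l i / fv l i ∧
  (∀ j : Fin (l+1), j ≠ i → j ≠ i+1 → j ≠ i-1 → s (fv l j) = fv l j)


open Fin.NatCast in
/-- Right-hand side of the `A_{2n}⁽¹⁾` system:
`F_j = f_j (Σ_{r=1}^n f_{j+2r-1} - Σ_{r=1}^n f_{j+2r}) + α_j` (indices mod `2n+1`). -/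
def F2n (n : ℕ) (j : Fin (2*n+1)) : K (2*n) :=
  fv (2*n) j *
    ((∑ r ∈ Finset.range n, fv (2*n) (j + ((2*r+1 : ℕ) : Fin (2*n+1)))) -
      ∑ r ∈ Finset.range n, fv (2*n) (j + ((2*r+2 : ℕ) : Fin (2*n+1)))) +
  av (2*n) j

open Finset

theorem av_ne_zero (l : ℕ) (i : Fin (l+1)) : av l i ≠ 0 :=
  (map_ne_zero_iff _ (IsFractionRing.injective _ _)).2 (X_ne_zero _)

theorem fv_ne_zero (l : ℕ) (i : Fin (l+1)) : fv l i ≠ 0 :=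
  (map_ne_zero_iff _ (IsFractionRing.injective _ _)).2 (X_ne_zero _)

open Fin.NatCast in
theorem IsBT.map_fv_natCast {l : ℕ} {s : K l ≃+* K l} (hs : IsBT l 1 s) {a : ℕ}
    (ha : 3 ≤ a) (hal : a ≤ l) : s (fv l a) = fv l a := by
  have hval : ((a : Fin (l+1)) : ℕ) = a := Fin.val_cast_of_lt (by omega)
  refine hs.2.2.2.2.2.2.2 _ ?_ ?_ ?_ <;>
    simp only [ne_eq, sub_self, Fin.ext_iff, hval, Fin.val_add, Fin.val_one', Fin.val_zero,
      Nat.mod_eq_of_lt (show 1 < l + 1 by omega), Nat.mod_eq_of_lt (show 2 < l + 1 by omega)] <;>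
    omega

open Fin.NatCast in
theorem IsBT.map_fv_two {l : ℕ} {s : K l ≃+* K l} (hs : IsBT l 1 s) :
    s (fv l 2) = fv l 2 + av l 1 / fv l 1 := by
  simpa only [one_add_one_eq_two] using hs.2.2.2.2.2.1

open Fin.NatCast in
theorem IsBT.map_sum_fv_natCast {l : ℕ} {s : K l ≃+* K l} (hs : IsBT l 1 s) {t : Finset ℕ}
    {g : ℕ → ℕ} (hg : ∀ r ∈ t, 3 ≤ g r ∧ g r ≤ l) :
    s (∑ r ∈ t, fv l (g r)) = ∑ r ∈ t, fv l (g r) := by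
  rw [map_sum]
  exact sum_congr rfl fun r hr => hs.map_fv_natCast (hg r hr).1 (hg r hr).2

open Fin.NatCast in
theorem F2n_zero (m : ℕ) :
    F2n (m+1) 0 = fv _ 0 * ((∑ r ∈ range m, fv _ (2*r+3 : ℕ) + fv _ 1) -
      (∑ r ∈ range m, fv _ (2*r+4 : ℕ) + fv _ 2)) + av _ 0 := by
  simp only [F2n, sum_range_succ', zero_add, Nat.cast_ofNat, Nat.cast_one, mul_zero]
  rfl

open Fin.NatCast in
theorem F2n_one (m : ℕ) :
    F2n (m+1) 1 = fv _ 1 * ((∑ r ∈ range m, fv _ (2*r+4 : ℕ) + fv _ 2) -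
      (∑ r ∈ range m, fv _ (2*r+3 : ℕ) + fv _ 0)) + av _ 1 := by
  have hshift : ∀ k : ℕ, (1 : Fin (2*(m+1)+1)) + (k : Fin (2*(m+1)+1)) = ((k + 1 : ℕ) : Fin _) := by
    intro k; rw [Nat.cast_succ]; exact add_comm _ _
  simp only [F2n, hshift]
  have hwrap : ((2*m+2+1 : ℕ) : Fin (2*(m+1)+1)) = 0 := Fin.natCast_self _
  rw [sum_range_succ', sum_range_succ, hwrap]
  rfl

theorem demazure_quotient_eq {𝕜 : Type*} [Field 𝕜] {a₀ a₁ f₀ f₁ f₂ R R' : 𝕜}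
    (ha₁ : a₁ ≠ 0) (hf₁ : f₁ ≠ 0) :
    (((f₀ - a₁ / f₁) * ((R + f₁) - (R' + (f₂ + a₁ / f₁))) + (a₀ + a₁)) -
        (f₀ * ((R + f₁) - (R' + f₂)) + a₀)) / a₁ =
      (f₁ * ((R' + f₂) - (R + f₀)) + a₁) / f₁ ^ 2 := by
  field_simp
  ring

/-- The Demazure-type identity `Δ₁(F₀) = F₁ / f₁²` where `Δ₁(φ) = (s₁(φ) - φ)/α₁`. -/
theorem stmt5 (n : ℕ) (hn : 1 ≤ n) (s : K (2*n) ≃+* K (2*n)) (hs : IsBT (2*n) 1 s) :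
    (s (F2n n 0) - F2n n 0) / av (2*n) 1 = F2n n 1 / (fv (2*n) 1)^2 := by
  obtain ⟨m, rfl⟩ : ∃ m, n = m + 1 := ⟨n - 1, by omega⟩
  have hodd := hs.map_sum_fv_natCast (t := range m) (g := fun r => 2*r+3)
    fun r hr => ⟨by omega, by simp only [mem_range] at hr; omega⟩
  have heven := hs.map_sum_fv_natCast (t := range m) (g := fun r => 2*r+4)
    fun r hr => ⟨by omega, by simp only [mem_range] at hr; omega⟩
  have hf₂ := hs.map_fv_two
  obtain ⟨-, -, hα₀, -, hf₁, -, hf₀, -⟩ := hs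
  rw [sub_self] at hα₀ hf₀
  rw [F2n_zero, F2n_one, map_add, map_mul, map_sub, map_add, map_add, hodd, heven, hf₀, hf₁, hf₂,
    hα₀]
  exact demazure_quotient_eq (av_ne_zero _ 1) (fv_ne_zero _ 1)
end
end

section
/- The Poisson bracket {φ,ψ} = Σ_{i,j} (∂φ/∂f_i) u_{ij} (∂ψ/∂f_j) on C(α;f) is invariant under the Bäcklund transformations: for every i and all φ, ψ ∈ C(α;f), one has s_i({φ,ψ}) = {s_i(φ), s_i(ψ)}. -/
/-!
By the chain rule, the gradient `∇x = (∂x/∂f_j)_j` transforms as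
`∇(s_i x) = s_i (∇x + c (U ∇x)_i e_i)` with `c = α_i / f_i²`. The map `g ↦ g + c (U g)_i e_i`
is a transvection preserving the form `g ⬝ U h`, since `U` is antisymmetric with zero diagonal;
as `s_i` fixes the entries of `U`, the bracket `{φ, ψ} = ∇φ ⬝ U ∇ψ` is invariant.

The chain rule is an identity between `ℂ`-derivations of `ℂ(α; f)`, so it is checked on the
generators. For `s_i⁻¹ ∘ ∂/∂f_j ∘ s_i` to be `ℂ`-linear one needs that the ring automorphism
`s_i` maps `ℂ` into itself: the nonzero constants are exactly the elements having `n`-th roots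
for every `n`, by unique factorization.
-/

open MvPolynomial

noncomputable section

/-- `D` is the partial derivation `∂/∂f_i` of the rational function field `ℂ(α;f)`. -/
def IsPD (l : ℕ) (i : Fin (l+1)) (D : K l → K l) : Prop :=
  (∀ x y : K l, D (x + y) = D x + D y) ∧
  (∀ x y : K l, D (x * y) = x * D y + D x * y) ∧
  (∀ c : ℂ, D (algebraMap (MvPolynomial (Fin (l+1) ⊕ Fin (l+1)) ℂ) (K l) (C c)) = 0) ∧
  (∀ j : Fin (l+1), D (fv l j) = if j = i then 1 else 0) ∧
  (∀ j : Fin (l+1), D (av l j) = 0)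

/-- The matrix `U`: `u_{i,i+1} = 1`, `u_{i,i-1} = -1`, `u_{ij} = 0` otherwise. -/
def uMat (l : ℕ) (i j : Fin (l+1)) : K l :=
  if j = i + 1 then 1 else if j = i - 1 then -1 else 0

open Matrix

theorem UniqueFactorizationMonoid.count_normalizedFactors_eq_of_mul_pow_eq_mul_pow {R : Type*}
    [CommMonoidWithZero R] [NormalizationMonoid R] [UniqueFactorizationMonoid R]
    [DecidableEq R] {p q a b : R} {n : ℕ} (hp : p ≠ 0) (hq : q ≠ 0) (ha : a ≠ 0) (hb : b ≠ 0)
    (h : p * b ^ n = q * a ^ n) (r : R) (hpn : (normalizedFactors p).count r < n)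
    (hqn : (normalizedFactors q).count r < n) :
    (normalizedFactors p).count r = (normalizedFactors q).count r := by
  have hcount := congrArg (fun t => (normalizedFactors t).count r) h
  simp only [normalizedFactors_mul hp (pow_ne_zero _ hb),
    normalizedFactors_mul hq (pow_ne_zero _ ha), normalizedFactors_pow, Multiset.count_add,
    Multiset.count_nsmul] at hcount
  simpa only [Nat.add_mul_mod_self_left, Nat.mod_eq_of_lt hpn, Nat.mod_eq_of_lt hqn] using
    congrArg (· % n) hcount

open UniqueFactorizationMonoid in
theorem IsFractionRing.exists_isUnit_eq_algebraMap_of_forall_exists_pow_eq {R K : Type*}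
    [CommRing R] [IsDomain R] [UniqueFactorizationMonoid R] [Field K] [Algebra R K]
    [IsFractionRing R K] {w : K} (hw : w ≠ 0) (h : ∀ n, 0 < n → ∃ v : K, v ^ n = w) :
    ∃ u : R, IsUnit u ∧ w = algebraMap R K u := by
  classical
  let := UniqueFactorizationMonoid.strongNormalizationMonoid (α := R)
  obtain ⟨p, q, hq, rfl⟩ := IsFractionRing.div_surjective (A := R) w
  have hq0 : q ≠ 0 := nonZeroDivisors.ne_zero hq
  have hp0 : p ≠ 0 := by rintro rfl; simp at hw
  have hpq : normalizedFactors p = normalizedFactors q := by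
    ext r
    -- the multiplicities of `r` in `p` and `q` are below `n` and congruent modulo `n`
    set n := (normalizedFactors p).count r + (normalizedFactors q).count r + 1
    obtain ⟨v, hv⟩ := h n (by omega)
    obtain ⟨a, b, hb, rfl⟩ := IsFractionRing.div_surjective (A := R) v
    have hb0 : b ≠ 0 := nonZeroDivisors.ne_zero hb
    have ha0 : a ≠ 0 := by rintro rfl; exact hw (by simpa using hv.symm)
    refine count_normalizedFactors_eq_of_mul_pow_eq_mul_pow (n := n) hp0 hq0 ha0 hb0 ?_ r
      (by omega) (by omega)
    apply IsFractionRing.injective R K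
    rw [div_pow, div_eq_div_iff
      (pow_ne_zero _ (IsFractionRing.to_map_ne_zero_of_mem_nonZeroDivisors hb))
      (IsFractionRing.to_map_ne_zero_of_mem_nonZeroDivisors hq)] at hv
    simp only [map_mul, map_pow]
    linear_combination -hv
  obtain ⟨u, rfl⟩ := (associated_iff_normalizedFactors_eq_normalizedFactors hp0 hq0).2 hpq
  refine ⟨↑u⁻¹, Units.isUnit _, ?_⟩
  have hp' : algebraMap R K p ≠ 0 := by simpa using hp0
  rw [map_mul, div_mul_cancel_left₀ hp', map_units_inv]

theorem MvPolynomial.exists_eq_algebraMap_C_of_forall_exists_pow_eq {σ k L : Type*} [Field k]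
    [Field L] [Algebra (MvPolynomial σ k) L] [IsFractionRing (MvPolynomial σ k) L] {w : L}
    (h : ∀ n, 0 < n → ∃ v : L, v ^ n = w) :
    ∃ c : k, w = algebraMap (MvPolynomial σ k) L (C c) := by
  by_cases hw : w = 0
  · exact ⟨0, by simp [hw]⟩
  obtain ⟨u, hu, rfl⟩ :=
    IsFractionRing.exists_isUnit_eq_algebraMap_of_forall_exists_pow_eq (R := MvPolynomial σ k) hw h
  obtain ⟨c, -, rfl⟩ := isUnit_iff_eq_C_of_isReduced.mp hu
  exact ⟨c, rfl⟩

theorem MvPolynomial.exists_ringEquiv_apply_algebraMap_C_eq {σ k L : Type*} [Field k]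
    [IsAlgClosed k] [Field L] [Algebra (MvPolynomial σ k) L]
    [IsFractionRing (MvPolynomial σ k) L] (s : L ≃+* L) (c : k) :
    ∃ c' : k,
      s (algebraMap (MvPolynomial σ k) L (C c)) = algebraMap (MvPolynomial σ k) L (C c') :=
  exists_eq_algebraMap_C_of_forall_exists_pow_eq fun n hn => by
    obtain ⟨d, rfl⟩ := IsAlgClosed.exists_pow_nat_eq c hn
    exact ⟨s (algebraMap _ L (C d)), by rw [← map_pow, ← map_pow, C_pow]⟩

theorem Derivation.ext_of_isFractionRing {A R K : Type*} [CommRing A] [CommRing R] [Field K]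
    [Algebra A K] [Algebra R K] [IsFractionRing R K]
    {D₁ D₂ : Derivation A K K} (h : ∀ r : R, D₁ (algebraMap R K r) = D₂ (algebraMap R K r)) :
    D₁ = D₂ := by
  ext x
  obtain ⟨p, q, -, rfl⟩ := IsFractionRing.div_surjective (A := R) x
  simp only [Derivation.leibniz_div, h]

theorem MvPolynomial.derivation_ext_of_isFractionRing {σ A K : Type*} [CommRing A] [Field K]
    [Algebra (MvPolynomial σ A) K] [IsFractionRing (MvPolynomial σ A) K] [Algebra A K]
    [IsScalarTower A (MvPolynomial σ A) K] {D₁ D₂ : Derivation A K K}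
    (h : ∀ n, D₁ (algebraMap (MvPolynomial σ A) K (X n)) =
      D₂ (algebraMap (MvPolynomial σ A) K (X n))) :
    D₁ = D₂ :=
  Derivation.ext_of_isFractionRing (R := MvPolynomial σ A) fun r =>
    congrArg (· r) (derivation_ext (D₁ := D₁.compAlgebraMap (MvPolynomial σ A))
      (D₂ := D₂.compAlgebraMap (MvPolynomial σ A)) h)

def Derivation.conjRingEquiv {R A : Type*} [CommSemiring R] [CommRing A] [Algebra R A]
    (D : Derivation R A A) (s : A ≃+* A) (hs : ∀ r : R, D (s (algebraMap R A r)) = 0) :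
    Derivation R A A :=
  Derivation.mk'
    { toFun := fun a => s.symm (D (s a))
      map_add' := fun a b => by simp only [map_add]
      map_smul' := fun r a => by
        simp [Algebra.smul_def, Derivation.leibniz, hs] }
    fun a b => by simp [Derivation.leibniz]

theorem Derivation.conjRingEquiv_apply {R A : Type*} [CommSemiring R] [CommRing A] [Algebra R A]
    (D : Derivation R A A) (s : A ≃+* A) (hs : ∀ r : R, D (s (algebraMap R A r)) = 0) (a : A) :
    D.conjRingEquiv s hs a = s.symm (D (s a)) := rfl

theorem Matrix.add_single_dotProduct_mulVec_add_single {R n : Type*} [CommRing R] [Fintype n]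
    [DecidableEq n] {U : Matrix n n R} (hU : Uᵀ = -U) {i : n} (hUi : U i i = 0) (c : R)
    (g h : n → R) :
    (g + Pi.single i (c * (U *ᵥ g) i)) ⬝ᵥ (U *ᵥ (h + Pi.single i (c * (U *ᵥ h) i))) =
      g ⬝ᵥ (U *ᵥ h) := by
  have hsingle (v : n → R) (r : R) : v ⬝ᵥ (U *ᵥ Pi.single i r) = -((U *ᵥ v) i * r) := by
    have hUa (a : n) : U a i = -U i a := by simpa using congrFun (congrFun hU i) a
    rw [mulVec_single]
    simp [dotProduct, mulVec, hUa, Finset.mul_sum, mul_comm, mul_left_comm]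
  have hsingle' (r : R) : (U *ᵥ Pi.single i r) i = 0 := by
    simp [hUi]
  simp only [mulVec_add, dotProduct_add, add_dotProduct, hsingle, single_dotProduct, hsingle',
    Pi.add_apply]
  ring

section

variable {l : ℕ}

theorem K.algebraMap_complex_apply (c : ℂ) :
    algebraMap ℂ (K l) c = algebraMap (MvPolynomial (Fin (l+1) ⊕ Fin (l+1)) ℂ) (K l) (C c) := by
  rw [IsScalarTower.algebraMap_apply ℂ (MvPolynomial (Fin (l+1) ⊕ Fin (l+1)) ℂ) (K l),
    MvPolynomial.algebraMap_eq]

def IsPD.toDerivation {i : Fin (l+1)} {D : K l → K l} (hD : IsPD l i D) :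
    Derivation ℂ (K l) (K l) :=
  Derivation.mk'
    { toFun := D
      map_add' := hD.1
      map_smul' := fun c x => by
        simp only [Algebra.smul_def, K.algebraMap_complex_apply, hD.2.1, hD.2.2.1, zero_mul,
          add_zero, RingHom.id_apply] }
    fun x y => by simp only [LinearMap.coe_mk, AddHom.coe_mk, hD.2.1, smul_eq_mul]; ring

theorem IsPD.toDerivation_apply {i : Fin (l+1)} {D : K l → K l} (hD : IsPD l i D) (x : K l) :
    hD.toDerivation x = D x := rfl

theorem Fin.one_ne_zero_of_two_le (hl : 2 ≤ l) : (1 : Fin (l+1)) ≠ 0 := by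
  simp only [ne_eq, Fin.one_eq_zero_iff]
  omega

theorem Fin.sub_one_ne_self_of_two_le (hl : 2 ≤ l) (a : Fin (l+1)) : a - 1 ≠ a :=
  fun h => Fin.one_ne_zero_of_two_le hl (sub_eq_self.mp h)

theorem Fin.add_one_ne_sub_one_of_two_le (hl : 2 ≤ l) (a : Fin (l+1)) : a + 1 ≠ a - 1 := by
  intro h
  have h2 : a + (1 + 1) = a := by rw [← add_assoc, h, sub_add_cancel]
  simp [Fin.ext_iff, Fin.val_add, Nat.mod_eq_of_lt (show 1 < l + 1 by omega),
    Nat.mod_eq_of_lt (show 2 < l + 1 by omega)] at h2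

theorem uMat_self (hl : 2 ≤ l) (a : Fin (l+1)) : uMat l a a = 0 := by
  simp [uMat, (Fin.sub_one_ne_self_of_two_le hl a).symm, Fin.one_ne_zero_of_two_le hl]

theorem uMat_eq_sub (hl : 2 ≤ l) (a b : Fin (l+1)) :
    uMat l a b = (if b = a + 1 then 1 else 0) - (if b = a - 1 then 1 else 0) := by
  unfold uMat
  have := Fin.add_one_ne_sub_one_of_two_le hl a
  split_ifs <;> simp_all

theorem map_uMat {F : Type*} [FunLike F (K l) (K l)] [RingHomClass F (K l) (K l)] (s : F)
    (a b : Fin (l+1)) : s (uMat l a b) = uMat l a b := by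
  unfold uMat
  split_ifs <;> simp

theorem IsPD.apply_uMat {j : Fin (l+1)} {D : K l → K l} (hD : IsPD l j D) (a b : Fin (l+1)) :
    D (uMat l a b) = 0 := by
  rw [← hD.toDerivation_apply]
  unfold uMat
  split_ifs <;> simp

theorem uMat_transpose (hl : 2 ≤ l) : (Matrix.of (uMat l))ᵀ = -Matrix.of (uMat l) := by
  ext a b
  have hsucc : a = b + 1 ↔ b = a - 1 := by rw [eq_sub_iff_add_eq, eq_comm]
  have hpred : a = b - 1 ↔ b = a + 1 := by rw [eq_sub_iff_add_eq, eq_comm]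
  simp only [transpose_apply, Matrix.neg_apply, of_apply, uMat_eq_sub hl, hsucc, hpred]
  ring

theorem mulVec_uMat (hl : 2 ≤ l) (g : Fin (l+1) → K l) (a : Fin (l+1)) :
    (Matrix.of (uMat l) *ᵥ g) a = g (a + 1) - g (a - 1) := by
  simp [Matrix.mulVec, dotProduct, uMat_eq_sub hl, sub_mul, Finset.sum_sub_distrib]

theorem sum_sum_mul_uMat_mul (g h : Fin (l+1) → K l) :
    ∑ a, ∑ b, g a * uMat l a b * h b = g ⬝ᵥ (Matrix.of (uMat l) *ᵥ h) := by
  simp [dotProduct, Matrix.mulVec, Finset.mul_sum, mul_assoc]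

theorem map_dotProduct_uMat_mulVec {F : Type*} [FunLike F (K l) (K l)]
    [RingHomClass F (K l) (K l)] (s : F) (g h : Fin (l+1) → K l) :
    s (g ⬝ᵥ (Matrix.of (uMat l) *ᵥ h)) = (s ∘ g) ⬝ᵥ (Matrix.of (uMat l) *ᵥ (s ∘ h)) := by
  rw [← RingHom.coe_coe s, RingHom.map_dotProduct]
  congr 1
  ext a
  rw [Function.comp_apply, RingHom.map_mulVec]
  congr 2
  ext a b
  exact map_uMat s a b

theorem IsBT.apply_fv {i : Fin (l+1)} {s : K l ≃+* K l} (hl : 2 ≤ l)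
    (hs : IsBT l i s) (k : Fin (l+1)) :
    s (fv l k) = fv l k + uMat l i k * (av l i / fv l i) := by
  obtain ⟨-, -, -, -, hi, hsucc, hpred, hother⟩ := hs
  by_cases hk : k = i + 1
  · rw [hk, hsucc, uMat, if_pos rfl, one_mul]
  by_cases hk' : k = i - 1
  · rw [hk', hpred, uMat, if_neg (Fin.add_one_ne_sub_one_of_two_le hl i).symm, if_pos rfl]
    ring
  by_cases hk'' : k = i
  · rw [hk'', hi, uMat_self hl, zero_mul, add_zero]
  · rw [hother k hk'' hk hk', uMat, if_neg hk, if_neg hk', zero_mul, add_zero]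

theorem IsBT.apply_av_div_fv_sq {i : Fin (l+1)} {s : K l ≃+* K l} (hs : IsBT l i s) :
    s (av l i / fv l i ^ 2) = -(av l i / fv l i ^ 2) := by
  rw [map_div₀, map_pow, hs.1, hs.2.2.2.2.1]
  ring

theorem IsBT.isPD_apply_av {i j : Fin (l+1)} {s : K l ≃+* K l} {D : K l → K l}
    (hs : IsBT l i s) (hD : IsPD l j D) (k : Fin (l+1)) : D (s (av l k)) = 0 := by
  obtain ⟨hi, hsucc, hpred, hother, -⟩ := hs
  have hav := hD.2.2.2.2
  by_cases hk : k = i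
  · rw [hk, hi, ← hD.toDerivation_apply, map_neg, hD.toDerivation_apply, hav, neg_zero]
  by_cases hk' : k = i + 1
  · rw [hk', hsucc, hD.1, hav, hav, add_zero]
  by_cases hk'' : k = i - 1
  · rw [hk'', hpred, hD.1, hav, hav, add_zero]
  · rw [hother k hk hk' hk'', hav]

theorem IsBT.isPD_apply_fv {i : Fin (l+1)} {s : K l ≃+* K l} {D : Fin (l+1) → K l → K l}
    (hl : 2 ≤ l) (hs : IsBT l i s) (hD : ∀ j, IsPD l j (D j)) (j k : Fin (l+1)) :
    D j (s (fv l k)) = s (D j (fv l k) +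
      (if j = i then av l i / fv l i ^ 2 else 0) * (D (i+1) (fv l k) - D (i-1) (fv l k))) := by
  rw [hs.apply_fv hl, ← (hD j).toDerivation_apply]
  simp only [map_add, Derivation.leibniz, Derivation.leibniz_div, IsPD.toDerivation_apply,
    (hD j).apply_uMat, (hD _).2.2.2.1, (hD j).2.2.2.2, ← uMat_eq_sub hl, map_mul, apply_ite s,
    hs.apply_av_div_fv_sq, map_uMat, smul_eq_mul, map_one, map_zero]
  rcases eq_or_ne j i with rfl | hji
  · simp only [if_true]
    field_simp
    ring
  · simp [hji, hji.symm]

theorem IsBT.isPD_comp {i : Fin (l+1)} {s : K l ≃+* K l} {D : Fin (l+1) → K l → K l}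
    (hl : 2 ≤ l) (hs : IsBT l i s) (hD : ∀ j, IsPD l j (D j)) (j : Fin (l+1)) (x : K l) :
    D j (s x) = s (D j x +
      (if j = i then av l i / fv l i ^ 2 else 0) * (D (i+1) x - D (i-1) x)) := by
  have hconst (c : ℂ) : (hD j).toDerivation (s (algebraMap ℂ (K l) c)) = 0 := by
    obtain ⟨c', hc'⟩ := exists_ringEquiv_apply_algebraMap_C_eq (σ := Fin (l+1) ⊕ Fin (l+1)) s c
    rw [K.algebraMap_complex_apply, hc', (hD j).toDerivation_apply, (hD j).2.2.1]
  have key : (hD j).toDerivation.conjRingEquiv s hconst = (hD j).toDerivation +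
      (if j = i then av l i / fv l i ^ 2 else 0) •
        ((hD (i+1)).toDerivation - (hD (i-1)).toDerivation) := by
    refine derivation_ext_of_isFractionRing (σ := Fin (l+1) ⊕ Fin (l+1)) fun n => ?_
    simp only [Derivation.conjRingEquiv_apply, RingEquiv.symm_apply_eq, Derivation.add_apply,
      Derivation.smul_apply, Derivation.sub_apply, IsPD.toDerivation_apply, smul_eq_mul]
    rcases n with k | k
    · change D j (s (av l k)) = s (D j (av l k) + _ * (D (i+1) (av l k) - D (i-1) (av l k)))
      simp [hs.isPD_apply_av (hD j), (hD _).2.2.2.2]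
    · exact hs.isPD_apply_fv hl hD j k
  calc D j (s x) = s ((hD j).toDerivation.conjRingEquiv s hconst x) :=
        (s.apply_symm_apply _).symm
    _ = _ := by rw [key]; rfl

end

/-- The Poisson bracket is invariant under the Bäcklund transformations:
`s_i({φ,ψ}) = {s_i(φ), s_i(ψ)}`. -/
theorem stmt7 (l : ℕ) (hl : 2 ≤ l) (D : Fin (l+1) → K l → K l)
    (hD : ∀ i, IsPD l i (D i)) (i : Fin (l+1)) (s : K l ≃+* K l) (hs : IsBT l i s) :
    ∀ φ ψ : K l,
      (let pb : K l → K l → K l := fun φ ψ =>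
        ∑ i' : Fin (l+1), ∑ j : Fin (l+1), D i' φ * uMat l i' j * D j ψ
      s (pb φ ψ) = pb (s φ) (s ψ)) := by
  intro φ ψ
  let grad (x : K l) (j : Fin (l+1)) : K l := D j x
  have hchain (x : K l) : grad (s x) =
      s ∘ (grad x + Pi.single i (av l i / fv l i ^ 2 * (Matrix.of (uMat l) *ᵥ grad x) i)) := by
    ext j
    simp [grad, hs.isPD_comp hl hD j x, mulVec_uMat hl, Pi.single_apply, ite_mul, -of_apply]
  change s (∑ a, ∑ b, grad φ a * uMat l a b * grad ψ b) =
    ∑ a, ∑ b, grad (s φ) a * uMat l a b * grad (s ψ) b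
  rw [sum_sum_mul_uMat_mul, sum_sum_mul_uMat_mul, hchain, hchain, ← map_dotProduct_uMat_mulVec,
    Matrix.add_single_dotProduct_mulVec_add_single (uMat_transpose hl) (uMat_self hl i)]
end
end
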